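/- (Main theorem, part (i): membership in the Dixmier ideal.) Let α > 0, let φ : Σ_A⁺ → ℝ be α-Hölder with −φ normalized and φ(x) > 0 for all x, and let f : Σ_A⁺ → ℝ be continuous with f ≥ 0 and f not identically 0. Define e : W* × {1,2} → ℝ by e(w,1) = f(w y^{t(w)}) e^{−φ^{|w|}(w x^{t(w)})} and e(w,2) = f(w z^{t(w)}) e^{−φ^{|w|}(w x^{t(w)})} (these are the eigenvalues of π(f)|D_φ|^{−1}), and let a : {1,2,3,…} → ℝ be a nonincreasing enumeration of the family e, i.e. a_n = e(β(n)) for a bijection β with a₁ ≥ a₂ ≥ a₃ ≥ ⋯ (such an enumeration exists since e(w,i) → 0 as |w| → ∞). Then limsup_{n→∞} (1/log n) Σ_{m=1}^n a_m < ∞. -/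

import Mathlib

/-! The eigenvalues of level `n` (words of length `n + 1`) have total mass at most `2 k max f`:
for a fixed last letter `j`, the weights `e^{-φ^{n+1}(w x^j)}` are summands of
`(L_{-φ}^{n+1} 1)(x^j) = 1`. On the other hand `φ ≥ c > 0` by compactness, so an eigenvalue of
level `n` is at most `max f · e^{-cn}`. Among any `m ≥ 2` eigenvalues, those of level below
`N = ⌈log m / c⌉` contribute at most `2 k max f · N`, and the remaining ones at most
`m · max f · e^{-cN} ≤ max f`; so the sum is `O(log m)`. -/

open scoped BigOperators Classical
open Filter Topology MeasureTheory

namespace SpectralGibbs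

/-- The one-sided shift space `Σ_A⁺` determined by a `k × k` zero-one matrix `A`. -/
abbrev ShiftSpace (k : ℕ) (A : Matrix (Fin k) (Fin k) ℕ) : Type :=
  {x : ℕ → Fin k // ∀ m : ℕ, A (x m) (x (m + 1)) = 1}

/-- `A` has entries in `{0,1}`. -/
def ZeroOne (k : ℕ) (A : Matrix (Fin k) (Fin k) ℕ) : Prop :=
  ∀ i j : Fin k, A i j = 0 ∨ A i j = 1

/-- `A` is aperiodic: some power of `A` has all entries positive. -/
def Aperiodic (k : ℕ) (A : Matrix (Fin k) (Fin k) ℕ) : Prop :=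
  ∃ n : ℕ, 1 ≤ n ∧ ∀ i j : Fin k, 0 < (A ^ n) i j

/-- The shift map `σ`. -/
def shift (k : ℕ) (A : Matrix (Fin k) (Fin k) ℕ) :
    ShiftSpace k A → ShiftSpace k A :=
  fun x => ⟨fun m => x.1 (m + 1), fun m => x.2 (m + 1)⟩

/-- The metric `d(x,y) = 2^{-min{m : x_m ≠ y_m}}` for `x ≠ y` (and `0` for `x = y`). -/
noncomputable def dist' (k : ℕ) (A : Matrix (Fin k) (Fin k) ℕ)
    (x y : ShiftSpace k A) : ℝ :=
  if x = y then 0 else (2 : ℝ)⁻¹ ^ sInf {m : ℕ | x.1 m ≠ y.1 m}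

/-- `f` is `α`-Hölder: `sup_{x ≠ y} ‖f x - f y‖ / d(x,y)^α < ∞`. -/
def IsHolder {E : Type*} [NormedAddCommGroup E] (k : ℕ) (A : Matrix (Fin k) (Fin k) ℕ)
    (α : ℝ) (f : ShiftSpace k A → E) : Prop :=
  ∃ C : ℝ, ∀ x y : ShiftSpace k A, ‖f x - f y‖ ≤ C * dist' k A x y ^ α

/-- The sequence `ix` obtained by prepending the symbol `i` to a sequence `x`. -/
def consSeq (k : ℕ) (i : Fin k) (x : ℕ → Fin k) : ℕ → Fin k
  | 0 => i
  | m + 1 => x m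

/-- The point `ix ∈ Σ_A⁺`, defined whenever `A(i, x_0) = 1`. -/
def cons (k : ℕ) (A : Matrix (Fin k) (Fin k) ℕ) (i : Fin k) (x : ShiftSpace k A)
    (h : A i (x.1 0) = 1) : ShiftSpace k A :=
  ⟨consSeq k i x.1, by
    intro m
    match m with
    | 0 => exact h
    | m + 1 => exact x.2 m⟩

/-- The transfer operator `(L_ψ g)(x) = Σ_{σ y = x} e^{ψ(y)} g(y)`. -/
noncomputable def transfer {E : Type*} [AddCommMonoid E] [SMul ℝ E]
    (k : ℕ) (A : Matrix (Fin k) (Fin k) ℕ)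
    (ψ : ShiftSpace k A → ℝ) (g : ShiftSpace k A → E) (x : ShiftSpace k A) : E :=
  ∑ i : Fin k,
    if h : A i (x.1 0) = 1 then Real.exp (ψ (cons k A i x h)) • g (cons k A i x h) else 0

/-- `-φ` is normalized: `Σ_{σ y = x} e^{-φ(y)} = 1` for all `x`. -/
def NormalizedNeg (k : ℕ) (A : Matrix (Fin k) (Fin k) ℕ) (φ : ShiftSpace k A → ℝ) : Prop :=
  ∀ x : ShiftSpace k A, transfer k A (fun y => -φ y) (fun _ => (1 : ℝ)) x = 1

/-- Birkhoff sum `φ^n = φ + φ∘σ + ⋯ + φ∘σ^{n-1}`. -/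
noncomputable def birk (k : ℕ) (A : Matrix (Fin k) (Fin k) ℕ)
    (φ : ShiftSpace k A → ℝ) (n : ℕ) (x : ShiftSpace k A) : ℝ :=
  ∑ i ∈ Finset.range n, φ ((shift k A)^[i] x)

/-- A word `w = (w_1, …, w_{n+1})` (of length `n+1 ≥ 1`) is allowed if consecutive
letters are compatible with `A`. -/
def Allowed (k : ℕ) (A : Matrix (Fin k) (Fin k) ℕ) {n : ℕ} (w : Fin (n + 1) → Fin k) : Prop :=
  ∀ i : Fin n, A (w i.castSucc) (w i.succ) = 1

/-- `W*`: the set of all allowed finite words (of length `≥ 1`). -/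
def Words (k : ℕ) (A : Matrix (Fin k) (Fin k) ℕ) : Type :=
  Σ n : ℕ, {w : Fin (n + 1) → Fin k // Allowed k A w}

/-- The length `|w|` of a word. -/
def wordLen (k : ℕ) (A : Matrix (Fin k) (Fin k) ℕ) (w : Words k A) : ℕ := w.1 + 1

/-- The last letter `t(w)` of a word. -/
def wordLast (k : ℕ) (A : Matrix (Fin k) (Fin k) ℕ) (w : Words k A) : Fin k :=
  w.2.1 (Fin.last w.1)

/-- The concatenated sequence `w x`. -/
def wordSeq (k : ℕ) {n : ℕ} (w : Fin (n + 1) → Fin k) (x : ℕ → Fin k) : ℕ → Fin k :=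
  fun m => if h : m < n + 1 then w ⟨m, h⟩ else x (m - (n + 1))

theorem glue_mem (k : ℕ) (A : Matrix (Fin k) (Fin k) ℕ) {n : ℕ}
    (w : Fin (n + 1) → Fin k) (hw : Allowed k A w) (x : ShiftSpace k A)
    (hx : A (w (Fin.last n)) (x.1 0) = 1) :
    ∀ m : ℕ, A (wordSeq k w x.1 m) (wordSeq k w x.1 (m + 1)) = 1 := by
  intro m
  unfold wordSeq
  rcases lt_trichotomy (m + 1) (n + 1) with h | h | h
  · have hm : m < n + 1 := by omega
    rw [dif_pos hm, dif_pos h]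
    exact hw ⟨m, by omega⟩
  · have hm : m < n + 1 := by omega
    rw [dif_pos hm, dif_neg (by omega)]
    have h0 : m + 1 - (n + 1) = 0 := by omega
    rw [h0]
    have hl : (⟨m, hm⟩ : Fin (n + 1)) = Fin.last n := by
      apply Fin.ext
      simp only [Fin.last]
      omega
    rw [hl]
    exact hx
  · rw [dif_neg (by omega), dif_neg (by omega)]
    have h1 : m + 1 - (n + 1) = (m - (n + 1)) + 1 := by omega
    rw [h1]
    exact x.2 (m - (n + 1))

/-- The point `w x ∈ Σ_A⁺`, for an allowed word `w` and `x` with `A(t(w), x_0) = 1`. -/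
def glue (k : ℕ) (A : Matrix (Fin k) (Fin k) ℕ) {n : ℕ}
    (w : Fin (n + 1) → Fin k) (hw : Allowed k A w) (x : ShiftSpace k A)
    (hx : A (w (Fin.last n)) (x.1 0) = 1) : ShiftSpace k A :=
  ⟨wordSeq k w x.1, glue_mem k A w hw x hx⟩

/-- Given a family of points `p j` with `A(j, (p j)_0) = 1`, the point `w p^{t(w)}`. -/
def wordPt (k : ℕ) (A : Matrix (Fin k) (Fin k) ℕ) {n : ℕ}
    (w : Fin (n + 1) → Fin k) (hw : Allowed k A w)
    (p : Fin k → ShiftSpace k A) (hp : ∀ j : Fin k, A j ((p j).1 0) = 1) : ShiftSpace k A :=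
  glue k A w hw (p (w (Fin.last n))) (hp _)

/-- The point `w p^{t(w)}` for `w ∈ W*`. -/
def wpt (k : ℕ) (A : Matrix (Fin k) (Fin k) ℕ)
    (p : Fin k → ShiftSpace k A) (hp : ∀ j : Fin k, A j ((p j).1 0) = 1)
    (w : Words k A) : ShiftSpace k A :=
  wordPt k A w.2.1 w.2.2 p hp

/-- The indicator function `χ_j` of the cylinder `[j] = {x : x_0 = j}`. -/
noncomputable def cylInd (k : ℕ) (A : Matrix (Fin k) (Fin k) ℕ) (j : Fin k) :
    ShiftSpace k A → ℝ :=
  fun x => if x.1 0 = j then 1 else 0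


/-- The eigenvalue family of `π(f)|D_φ|⁻¹`, indexed by `W* × {1,2}`. -/
noncomputable def eigval (k : ℕ) (A : Matrix (Fin k) (Fin k) ℕ)
    (xp : Fin k → ShiftSpace k A) (hxp : ∀ j : Fin k, A j ((xp j).1 0) = 1)
    (yp : Fin k → ShiftSpace k A) (hyp : ∀ j : Fin k, A j ((yp j).1 0) = 1)
    (zp : Fin k → ShiftSpace k A) (hzp : ∀ j : Fin k, A j ((zp j).1 0) = 1)
    (φ f : ShiftSpace k A → ℝ) : Words k A × Fin 2 → ℝ :=
  fun p =>
    (if p.2 = 0 then f (wpt k A yp hyp p.1) else f (wpt k A zp hzp p.1)) *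
      Real.exp (-(birk k A φ (wordLen k A p.1) (wpt k A xp hxp p.1)))


open Finset in
theorem exists_sum_le_mul_log_card {ι : Type*} (e : ι → ℝ) (ℓ : ι → ℕ) {K M c : ℝ}
    (hM : 0 ≤ M) (hc : 0 < c)
    (hlevel : ∀ (N : ℕ) (s : Finset ι), (∀ i ∈ s, ℓ i = N) → ∑ i ∈ s, e i ≤ K)
    (hdecay : ∀ i, e i ≤ M * Real.exp (-(c * ℓ i))) :
    ∃ C : ℝ, ∀ s : Finset ι, 2 ≤ #s → ∑ i ∈ s, e i ≤ C * Real.log #s := by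
  have hK : 0 ≤ K := by simpa using hlevel 0 ∅ (by simp)
  refine ⟨K / c + (K + M) / Real.log 2, fun s hs => ?_⟩
  have hn : (2 : ℝ) ≤ #s := by exact_mod_cast hs
  have hlog : 0 < Real.log 2 := Real.log_pos one_lt_two
  have hlogn : Real.log 2 ≤ Real.log #s := Real.log_le_log two_pos hn
  -- `N` is chosen so that the levels `ℓ ≥ N` have weight at most `e^{-cN} ≤ 1/#s`.
  set N := ⌈Real.log #s / c⌉₊
  have hlow : ∑ i ∈ s with ℓ i < N, e i ≤ N * K := by
    rw [← sum_fiberwise_of_maps_to (t := range N) (g := ℓ)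
      fun i hi => mem_range.2 (mem_filter.1 hi).2]
    calc _ ≤ ∑ _ ∈ range N, K :=
          sum_le_sum fun N' _ => hlevel N' _ fun i hi => (mem_filter.1 hi).2
      _ = N * K := by simp
  have hhigh : ∑ i ∈ s with ¬ ℓ i < N, e i ≤ M := by
    have hterm : ∀ i ∈ s.filter (¬ ℓ · < N), e i ≤ M * (#s : ℝ)⁻¹ := by
      intro i hi
      refine (hdecay i).trans (mul_le_mul_of_nonneg_left ?_ hM)
      rw [← Real.exp_log (by positivity : (0 : ℝ) < #s), ← Real.exp_neg, Real.exp_le_exp,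
        neg_le_neg_iff, ← div_le_iff₀' hc]
      exact (Nat.le_ceil _).trans (by exact_mod_cast not_lt.1 (mem_filter.1 hi).2)
    calc _ ≤ ∑ i ∈ s with ¬ ℓ i < N, M * (#s : ℝ)⁻¹ := sum_le_sum hterm
      _ ≤ #s * (M * (#s : ℝ)⁻¹) := by
          rw [sum_const, nsmul_eq_mul]
          gcongr
          exact filter_subset _ _
      _ = M := by field_simp
  calc ∑ i ∈ s, e i = ∑ i ∈ s with ℓ i < N, e i + ∑ i ∈ s with ¬ ℓ i < N, e i :=
        (sum_filter_add_sum_filter_not s _ _).symm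
    _ ≤ (Real.log #s / c + 1) * K + M := by
        gcongr
        exact hlow.trans (by gcongr; exact (Nat.ceil_lt_add_one (by positivity)).le)
    _ ≤ K / c * Real.log #s + (K + M) / Real.log 2 * Real.log #s := by
        have : K + M ≤ (K + M) / Real.log 2 * Real.log #s := by
          rw [div_mul_eq_mul_div, le_div_iff₀ hlog]
          gcongr
        linarith [show Real.log #s / c * K = K / c * Real.log #s by ring]
    _ = _ := by ring

section ShiftSpace

variable {k : ℕ} {A : Matrix (Fin k) (Fin k) ℕ}

instance : CompactSpace (ShiftSpace k A) := by
  refine isCompact_iff_compactSpace.mp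
    (IsClosed.isCompact (s := {x : ℕ → Fin k | ∀ m, A (x m) (x (m + 1)) = 1}) ?_)
  rw [Set.ofPred_forall]
  refine isClosed_iInter fun m => ?_
  have hpair : Continuous fun x : ℕ → Fin k => (x m, x (m + 1)) := by fun_prop
  exact (isClosed_discrete {p : Fin k × Fin k | A p.1 p.2 = 1}).preimage hpair

lemma dist'_le_of_forall_lt_eq {x y : ShiftSpace k A} {m : ℕ} (h : ∀ i < m, x.1 i = y.1 i) :
    dist' k A x y ≤ 2⁻¹ ^ m := by
  unfold dist'
  split_ifs with hxy
  · positivity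
  · have hne : {i | x.1 i ≠ y.1 i}.Nonempty :=
      Function.ne_iff.mp fun h => hxy (Subtype.ext h)
    refine pow_le_pow_of_le_one (by norm_num) (by norm_num) (not_lt.1 fun hlt => ?_)
    exact Nat.sInf_mem hne (h _ hlt)

lemma tendsto_dist'_nhds (x : ShiftSpace k A) :
    Tendsto (fun y => dist' k A y x) (𝓝 x) (𝓝 0) := by
  refine tendsto_order.2 ⟨fun a ha => Eventually.of_forall fun y => ?_, fun ε hε => ?_⟩
  · exact ha.trans_le (by unfold dist'; split_ifs <;> positivity)
  obtain ⟨m, hm⟩ := exists_pow_lt_of_lt_one hε (by norm_num : (2 : ℝ)⁻¹ < 1)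
  have hcyl : ∀ᶠ y in 𝓝 x, ∀ i < m, y.1 i = x.1 i :=
    (Set.finite_lt_nat m).eventually_all.2 fun i _ =>
      ((continuous_apply i).comp continuous_subtype_val).continuousAt.eventually_mem
        ((isOpen_discrete {x.1 i}).mem_nhds rfl)
  filter_upwards [hcyl] with y hy using (dist'_le_of_forall_lt_eq hy).trans_lt hm

lemma IsHolder.continuous {α : ℝ} (hα : 0 < α) {φ : ShiftSpace k A → ℝ}
    (hφ : IsHolder k A α φ) : Continuous φ := by
  obtain ⟨C, hC⟩ := hφ
  refine continuous_iff_continuousAt.2 fun x => tendsto_iff_norm_sub_tendsto_zero.2 ?_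
  refine squeeze_zero (fun _ => norm_nonneg _) (fun y => hC y x) ?_
  simpa [Real.zero_rpow hα.ne'] using
    ((tendsto_dist'_nhds x).rpow_const (Or.inr hα.le)).const_mul C

end ShiftSpace

section Words

variable {k : ℕ} {A : Matrix (Fin k) (Fin k) ℕ}

lemma birk_cons (φ : ShiftSpace k A → ℝ) (n : ℕ) (i : Fin k) (x : ShiftSpace k A)
    (h : A i (x.1 0) = 1) :
    birk k A φ (n + 1) (cons k A i x h) = φ (cons k A i x h) + birk k A φ n x := by
  simp only [birk, Finset.sum_range_succ', Function.iterate_succ_apply,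
    Function.iterate_zero_apply]
  rw [add_comm]
  rfl

lemma glue_eq_cons_of_fin_one (w : Fin 1 → Fin k) (hw : Allowed k A w) (x : ShiftSpace k A)
    (hx : A (w 0) (x.1 0) = 1) : glue k A w hw x hx = cons k A (w 0) x hx := by
  ext (_ | m) <;> rfl

lemma glue_fin_cons {n : ℕ} (i : Fin k) (w : Fin (n + 1) → Fin k)
    (hiw : Allowed k A (Fin.cons i w)) (hw : Allowed k A w) (x : ShiftSpace k A)
    (hx : A (w (Fin.last n)) (x.1 0) = 1) (hi : A i ((glue k A w hw x hx).1 0) = 1) :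
    glue k A (Fin.cons i w) hiw x hx = cons k A i (glue k A w hw x hx) hi := by
  refine Subtype.ext (funext fun m => ?_)
  rcases m with _ | m
  · rfl
  · show wordSeq k (Fin.cons i w) x.1 (m + 1) = wordSeq k w x.1 m
    unfold wordSeq
    by_cases hm : m < n + 1
    · rw [dif_pos (by omega), dif_pos hm]
      exact Fin.cons_succ (α := fun _ => Fin k) i w ⟨m, hm⟩
    · rw [dif_neg (by omega), dif_neg hm, show m + 1 - (n + 1 + 1) = m - (n + 1) by omega]

lemma allowed_fin_cons_iff {n : ℕ} (i : Fin k) (w : Fin (n + 1) → Fin k) :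
    Allowed k A (Fin.cons i w) ↔ A i (w 0) = 1 ∧ Allowed k A w := by
  simp [Allowed, Fin.forall_fin_succ]

end Words

section Transfer

variable {k : ℕ} {A : Matrix (Fin k) (Fin k) ℕ} {φ : ShiftSpace k A → ℝ}

/-- The summands of `(L_{-φ}^{N+1} 1)(x)`: the weight `e^{-φ^{N+1}(wx)}` of the
`σ^{N+1}`-preimage `wx` of `x`, and `0` when `wx` is not an admissible sequence. -/
noncomputable def preimageWeight (φ : ShiftSpace k A → ℝ) (N : ℕ) (x : ShiftSpace k A)
    (w : Fin (N + 1) → Fin k) : ℝ :=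
  if h : Allowed k A w ∧ A (w (Fin.last N)) (x.1 0) = 1 then
    Real.exp (-birk k A φ (N + 1) (glue k A w h.1 x h.2))
  else 0

lemma preimageWeight_nonneg (N : ℕ) (x : ShiftSpace k A) (w : Fin (N + 1) → Fin k) :
    0 ≤ preimageWeight φ N x w := by
  unfold preimageWeight
  split_ifs <;> positivity

lemma NormalizedNeg.sum_exp_neg_cons (hφ : NormalizedNeg k A φ) (x : ShiftSpace k A) :
    ∑ i : Fin k, (if h : A i (x.1 0) = 1 then Real.exp (-φ (cons k A i x h)) else 0) = 1 := by
  simpa [transfer] using hφ x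

lemma NormalizedNeg.sum_preimageWeight_zero (hφ : NormalizedNeg k A φ) (x : ShiftSpace k A) :
    ∑ w, preimageWeight φ 0 x w = 1 := by
  rw [← hφ.sum_exp_neg_cons x, ← (Equiv.funUnique (Fin 1) (Fin k)).symm.sum_comp]
  refine Fintype.sum_congr _ _ fun i => ?_
  show preimageWeight φ 0 x (fun _ => i) = _
  by_cases hi : A i (x.1 0) = 1
  · have hw : Allowed k A (fun _ : Fin 1 => i) := Fin.elim0
    rw [preimageWeight, dif_pos ⟨hw, hi⟩, dif_pos hi, glue_eq_cons_of_fin_one _ hw x hi]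
    simp [birk]
  · simp [preimageWeight, hi]

lemma NormalizedNeg.sum_preimageWeight_fin_cons (hφ : NormalizedNeg k A φ) {N : ℕ}
    (x : ShiftSpace k A) (w : Fin (N + 1) → Fin k) :
    ∑ i, preimageWeight φ (N + 1) x (Fin.cons i w) = preimageWeight φ N x w := by
  by_cases hw : Allowed k A w ∧ A (w (Fin.last N)) (x.1 0) = 1
  · set y := glue k A w hw.1 x hw.2
    rw [preimageWeight, dif_pos hw, ← one_mul (Real.exp _), ← hφ.sum_exp_neg_cons y,
      Finset.sum_mul]
    refine Fintype.sum_congr _ _ fun i => ?_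
    by_cases hi : A i (y.1 0) = 1
    · have hiw := (allowed_fin_cons_iff i w).2 ⟨hi, hw.1⟩
      rw [preimageWeight, dif_pos ⟨hiw, hw.2⟩, dif_pos hi, glue_fin_cons i w hiw hw.1 x hw.2 hi,
        birk_cons, neg_add, Real.exp_add]
    · rw [preimageWeight, dif_neg (fun h => hi ((allowed_fin_cons_iff i w).1 h.1).1), dif_neg hi,
        zero_mul]
  · rw [preimageWeight, dif_neg hw]
    exact Finset.sum_eq_zero fun i _ =>
      dif_neg fun h => hw ⟨((allowed_fin_cons_iff i w).1 h.1).2, h.2⟩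

lemma NormalizedNeg.sum_preimageWeight (hφ : NormalizedNeg k A φ) (N : ℕ)
    (x : ShiftSpace k A) : ∑ w, preimageWeight φ N x w = 1 := by
  induction N with
  | zero => exact hφ.sum_preimageWeight_zero x
  | succ N ih =>
    rw [← (Fin.consEquiv fun _ => Fin k).sum_comp, Fintype.sum_prod_type, Finset.sum_comm]
    exact (Fintype.sum_congr _ _ fun w => hφ.sum_preimageWeight_fin_cons x w).trans ih

open Finset in
lemma NormalizedNeg.sum_exp_neg_birk_wpt_le (hφ : NormalizedNeg k A φ)
    (xp : Fin k → ShiftSpace k A) (hxp : ∀ j : Fin k, A j ((xp j).1 0) = 1) (N : ℕ) :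
    ∑ w : {w : Fin (N + 1) → Fin k // Allowed k A w},
      Real.exp (-birk k A φ (N + 1) (wpt k A xp hxp ⟨N, w⟩)) ≤ k := by
  set F : (Fin (N + 1) → Fin k) → ℝ := fun w => ∑ j, preimageWeight φ N (xp j) w
  calc _ = ∑ w : {w : Fin (N + 1) → Fin k // Allowed k A w},
          preimageWeight φ N (xp (w.1 (Fin.last N))) w.1 :=
        Fintype.sum_congr _ _ fun w => (dif_pos ⟨w.2, hxp _⟩).symm
    _ ≤ ∑ w : {w : Fin (N + 1) → Fin k // Allowed k A w}, F w.1 :=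
        sum_le_sum fun w _ => single_le_sum (f := fun j => preimageWeight φ N (xp j) w.1)
          (fun j _ => preimageWeight_nonneg N _ _) (mem_univ _)
    _ = ∑ w ∈ univ.map (Function.Embedding.subtype _), F w :=
        (sum_map univ (Function.Embedding.subtype _) F).symm
    _ ≤ ∑ w, F w :=
        sum_le_univ_sum_of_nonneg fun w => sum_nonneg fun j _ => preimageWeight_nonneg N _ _
    _ = k := by simp [F, sum_comm (s := univ (α := Fin (N + 1) → Fin k)), hφ.sum_preimageWeight]

end Transfer

section Eigval

variable {k : ℕ} {A : Matrix (Fin k) (Fin k) ℕ}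
  {xp : Fin k → ShiftSpace k A} {hxp : ∀ j : Fin k, A j ((xp j).1 0) = 1}
  {yp : Fin k → ShiftSpace k A} {hyp : ∀ j : Fin k, A j ((yp j).1 0) = 1}
  {zp : Fin k → ShiftSpace k A} {hzp : ∀ j : Fin k, A j ((zp j).1 0) = 1}
  {φ f : ShiftSpace k A → ℝ} {M : ℝ}

lemma mul_le_birk {c : ℝ} (hφc : ∀ x, c ≤ φ x) (n : ℕ) (x : ShiftSpace k A) :
    c * n ≤ birk k A φ n x := by
  simpa [birk, mul_comm] using Finset.card_nsmul_le_sum (Finset.range n) _ c fun i _ => hφc _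

lemma eigval_nonneg (hf0 : ∀ x, 0 ≤ f x) (p : Words k A × Fin 2) :
    0 ≤ eigval k A xp hxp yp hyp zp hzp φ f p :=
  mul_nonneg (by split_ifs <;> exact hf0 _) (Real.exp_pos _).le

lemma eigval_le_mul_exp_neg_birk (hfM : ∀ x, f x ≤ M) (p : Words k A × Fin 2) :
    eigval k A xp hxp yp hyp zp hzp φ f p ≤
      M * Real.exp (-birk k A φ (wordLen k A p.1) (wpt k A xp hxp p.1)) := by
  unfold eigval
  gcongr
  split_ifs <;> exact hfM _

lemma eigval_le_mul_exp_neg_length (hfM : ∀ x, f x ≤ M) (hM : 0 ≤ M) {c : ℝ} (hc : 0 ≤ c)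
    (hφc : ∀ x, c ≤ φ x) (p : Words k A × Fin 2) :
    eigval k A xp hxp yp hyp zp hzp φ f p ≤ M * Real.exp (-(c * p.1.1)) := by
  refine (eigval_le_mul_exp_neg_birk hfM p).trans (mul_le_mul_of_nonneg_left ?_ hM)
  rw [Real.exp_le_exp, neg_le_neg_iff]
  refine le_trans ?_ (mul_le_birk hφc _ _)
  gcongr
  simp [wordLen]

lemma NormalizedNeg.sum_eigval_le (hφ : NormalizedNeg k A φ) (hf0 : ∀ x, 0 ≤ f x)
    (hfM : ∀ x, f x ≤ M) (hM : 0 ≤ M) (N : ℕ) (s : Finset (Words k A × Fin 2))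
    (hs : ∀ p ∈ s, p.1.1 = N) :
    ∑ p ∈ s, eigval k A xp hxp yp hyp zp hzp φ f p ≤ 2 * k * M := by
  let level : {w : Fin (N + 1) → Fin k // Allowed k A w} × Fin 2 ↪ Words k A × Fin 2 :=
    (Function.Embedding.sigmaMk (β := fun n => {w : Fin (n + 1) → Fin k // Allowed k A w}) N
      ).prodMap (Function.Embedding.refl _)
  have hsub : s ⊆ Finset.univ.map level := by
    rintro ⟨⟨n, w⟩, i⟩ hp
    obtain rfl : n = N := hs _ hp
    exact Finset.mem_map_of_mem _ (Finset.mem_univ (w, i))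
  calc _ ≤ ∑ p ∈ Finset.univ.map level, eigval k A xp hxp yp hyp zp hzp φ f p :=
        Finset.sum_le_sum_of_subset_of_nonneg hsub fun p _ _ => eigval_nonneg hf0 p
    _ = ∑ w, ∑ i : Fin 2, eigval k A xp hxp yp hyp zp hzp φ f (⟨N, w⟩, i) := by
        rw [Finset.sum_map, Fintype.sum_prod_type]
        rfl
    _ ≤ ∑ w : {w : Fin (N + 1) → Fin k // Allowed k A w},
          2 * M * Real.exp (-birk k A φ (N + 1) (wpt k A xp hxp ⟨N, w⟩)) :=
        Finset.sum_le_sum fun w _ => by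
          rw [Fin.sum_univ_two, mul_assoc, two_mul]
          exact add_le_add (eigval_le_mul_exp_neg_birk hfM _) (eigval_le_mul_exp_neg_birk hfM _)
    _ ≤ 2 * M * k := by
        rw [← Finset.mul_sum]
        exact mul_le_mul_of_nonneg_left (hφ.sum_exp_neg_birk_wpt_le xp hxp N) (by positivity)
    _ = 2 * k * M := by ring

end Eigval

theorem stmt17_general (k : ℕ) (A : Matrix (Fin k) (Fin k) ℕ)
    (xp : Fin k → ShiftSpace k A) (hxp : ∀ j : Fin k, A j ((xp j).1 0) = 1)
    (yp : Fin k → ShiftSpace k A) (hyp : ∀ j : Fin k, A j ((yp j).1 0) = 1)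
    (zp : Fin k → ShiftSpace k A) (hzp : ∀ j : Fin k, A j ((zp j).1 0) = 1)
    (α : ℝ) (hα : 0 < α) (φ : ShiftSpace k A → ℝ) (hφH : IsHolder k A α φ)
    (hφpos : ∀ x, 0 < φ x) (hnorm : NormalizedNeg k A φ)
    (f : ShiftSpace k A → ℝ) (hfc : Continuous f) (hf0 : ∀ x, 0 ≤ f x)
    (β : ℕ ≃ Words k A × Fin 2) :
    ∃ C : ℝ, ∀ n : ℕ, 2 ≤ n →
      (∑ m ∈ Finset.range n, eigval k A xp hxp yp hyp zp hzp φ f (β m)) ≤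
        C * Real.log n := by
  have : Nonempty (ShiftSpace k A) := ⟨wpt k A xp hxp (β 0).1⟩
  obtain ⟨xM, -, hxM⟩ := isCompact_univ.exists_isMaxOn Set.univ_nonempty hfc.continuousOn
  have hfM : ∀ x, f x ≤ f xM := fun x => hxM (Set.mem_univ x)
  obtain ⟨c, hc, hφc⟩ := isCompact_univ.exists_forall_le' (hφH.continuous hα).continuousOn
    fun x _ => hφpos x
  obtain ⟨C, hC⟩ := exists_sum_le_mul_log_card (eigval k A xp hxp yp hyp zp hzp φ f)
    (fun p => p.1.1) (hf0 xM) hc (hnorm.sum_eigval_le hf0 hfM (hf0 xM))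
    (eigval_le_mul_exp_neg_length hfM (hf0 xM) hc.le fun x => hφc x (Set.mem_univ x))
  refine ⟨C, fun n hn => ?_⟩
  simpa using hC ((Finset.range n).map β.toEmbedding) (by simpa using hn)

theorem stmt17 (k : ℕ) (hk : 1 ≤ k) (A : Matrix (Fin k) (Fin k) ℕ)
    (hA : ZeroOne k A) (hAper : Aperiodic k A)
    (xp : Fin k → ShiftSpace k A) (hxp : ∀ j : Fin k, A j ((xp j).1 0) = 1)
    (yp : Fin k → ShiftSpace k A) (hyp : ∀ j : Fin k, A j ((yp j).1 0) = 1)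
    (zp : Fin k → ShiftSpace k A) (hzp : ∀ j : Fin k, A j ((zp j).1 0) = 1)
    (hyz : ∀ j : Fin k, yp j ≠ zp j)
    (α : ℝ) (hα : 0 < α) (φ : ShiftSpace k A → ℝ) (hφH : IsHolder k A α φ)
    (hφpos : ∀ x, 0 < φ x) (hnorm : NormalizedNeg k A φ)
    (f : ShiftSpace k A → ℝ) (hfc : Continuous f) (hf0 : ∀ x, 0 ≤ f x)
    (hfne : ∃ x, f x ≠ 0)
    (β : ℕ ≃ Words k A × Fin 2)
    (hβ : ∀ m n : ℕ, m ≤ n →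
      eigval k A xp hxp yp hyp zp hzp φ f (β n) ≤
        eigval k A xp hxp yp hyp zp hzp φ f (β m)) :
    ∃ C : ℝ, ∀ n : ℕ, 2 ≤ n →
      (∑ m ∈ Finset.range n, eigval k A xp hxp yp hyp zp hzp φ f (β m)) ≤
        C * Real.log n :=
  stmt17_general k A xp hxp yp hyp zp hzp α hα φ hφH hφpos hnorm f hfc hf0 β

end SpectralGibbs
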